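/- Perturbation formula for pseudo-inverse (full row rank case): let A_0 ∈ ℝ^{m×l} with A_0 A_0^† = I_m, let Δ ∈ ℝ^{m×l}, and let t ∈ ℝ be such that I_l + t A_0^† Δ is invertible. Then the matrix B := (I_l + t A_0^† Δ)^{-1} A_0^† satisfies (A_0 + tΔ) B (A_0 + tΔ) = A_0 + tΔ on the assumption that the range of Δ is contained in the range of A_0; in particular if additionally range(Δ^T) ⊆ range(A_0^T), then B is the Moore-Penrose pseudo-inverse of A_0 + tΔ. -/
import Mathlib


open Matrix

/-- `X` satisfies the four Penrose equations for `A`. -/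
def IsMoorePenrose {m n : ℕ} (A : Matrix (Fin m) (Fin n) ℝ)
    (X : Matrix (Fin n) (Fin m) ℝ) : Prop :=
  X * A * X = X ∧ A * X * A = A ∧ (X * A)ᵀ = X * A ∧ (A * X)ᵀ = A * X

/-- Perturbation formula for the pseudo-inverse in the full row rank case. -/
theorem pseudoinverse_perturbation {m l : ℕ} (A0 Δ : Matrix (Fin m) (Fin l) ℝ)
    (X0 : Matrix (Fin l) (Fin m) ℝ) (hX0 : IsMoorePenrose A0 X0)
    (hfull : A0 * X0 = 1) (t : ℝ)
    (hinv : IsUnit ((1 : Matrix (Fin l) (Fin l) ℝ) + t • (X0 * Δ)).det)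
    (hrange : LinearMap.range Δ.mulVecLin ≤ LinearMap.range A0.mulVecLin) :
    (A0 + t • Δ) * (((1 : Matrix (Fin l) (Fin l) ℝ) + t • (X0 * Δ))⁻¹ * X0) *
        (A0 + t • Δ) = A0 + t • Δ ∧
    (LinearMap.range Δᵀ.mulVecLin ≤ LinearMap.range A0ᵀ.mulVecLin →
      IsMoorePenrose (A0 + t • Δ)
        (((1 : Matrix (Fin l) (Fin l) ℝ) + t • (X0 * Δ))⁻¹ * X0)) := by
  obtain ⟨hXAX, hAXA, hXAsym, hAXsym⟩ := hX0
  set S : Matrix (Fin l) (Fin l) ℝ := 1 + t • (X0 * Δ) with hSdef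
  have hS : A0 * S = A0 + t • Δ := by
    rw [hSdef, Matrix.mul_add, Matrix.mul_one, Matrix.mul_smul, ← Matrix.mul_assoc,
      hfull, Matrix.one_mul]
  have hSSinv : S * S⁻¹ = 1 := Matrix.mul_nonsing_inv S hinv
  have hSinvS : S⁻¹ * S = 1 := Matrix.nonsing_inv_mul S hinv
  have hAB : (A0 + t • Δ) * (S⁻¹ * X0) = 1 := by
    rw [← hS, Matrix.mul_assoc, ← Matrix.mul_assoc S, hSSinv, Matrix.one_mul, hfull]
  refine ⟨by rw [hAB, Matrix.one_mul], fun h => ?_⟩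
  have h1 : X0 * A0 * A0ᵀ = A0ᵀ := by
    conv_lhs => rw [← hXAsym]
    rw [← Matrix.transpose_mul, ← Matrix.mul_assoc, hAXA]
  -- from the range condition on Δᵀ, X0 * A0 * Δᵀ = Δᵀ
  have key : X0 * A0 * Δᵀ = Δᵀ := by
    apply Matrix.toLin'.injective
    apply LinearMap.ext
    intro x
    obtain ⟨y, hy⟩ := h (LinearMap.mem_range_self _ x)
    have hy' : Δᵀ.mulVec x = A0ᵀ.mulVec y := by
      simp only [Matrix.mulVecLin_apply] at hy
      exact hy.symm
    simp only [Matrix.toLin'_apply]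
    rw [← Matrix.mulVec_mulVec, hy', Matrix.mulVec_mulVec, h1, ← hy']
  have hΔP : Δ * (X0 * A0) = Δ := by
    have h2 := congrArg Matrix.transpose key
    simp only [Matrix.transpose_mul, Matrix.transpose_transpose] at h2
    rw [← hXAsym, Matrix.transpose_mul]
    simpa [Matrix.mul_assoc] using h2
  -- P := X0 * A0 commutes with S
  have hcomm : (X0 * A0) * S = S * (X0 * A0) := by
    rw [hSdef, Matrix.mul_add, Matrix.add_mul, Matrix.mul_one, Matrix.one_mul,
      Matrix.mul_smul, Matrix.smul_mul]
    congr 1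
    rw [← Matrix.mul_assoc, hXAX, Matrix.mul_assoc, hΔP]
  have hBA : (S⁻¹ * X0) * (A0 + t • Δ) = X0 * A0 := by
    rw [← hS, ← Matrix.mul_assoc, Matrix.mul_assoc S⁻¹ X0 A0,
      Matrix.mul_assoc S⁻¹ (X0 * A0) S, hcomm, ← Matrix.mul_assoc, hSinvS, Matrix.one_mul]
  refine ⟨?_, by rw [hAB, Matrix.one_mul], ?_, ?_⟩
  · rw [Matrix.mul_assoc (S⁻¹ * X0) (A0 + t • Δ) (S⁻¹ * X0), hAB, Matrix.mul_one]
  · rw [hBA, hXAsym]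
  · rw [hAB, Matrix.transpose_one]
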